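/- arXiv:math/0306356 — 15 statements merged into one kernel-verified Lean document; each statement's English description precedes it below -/
import Mathlib

section
/- Let P = (V, W) be a left R-pairing and consider V with the linear weak topology. For any subset X ⊆ V, the topological closure of X is contained in the double orthogonal X^⊥⊥. Consequently, every orthogonally closed right R-submodule of V (i.e. X = X^⊥⊥) is topologically closed. -/
/-- The linear weak topology on `V` induced by a left `R`-pairing `κ : V → *W`. -/
def linearWeakTopology {R V W : Type*} [Ring R] [AddCommGroup V] [Module Rᵐᵒᵖ V]
    [AddCommGroup W] [Module R W] (κ : V →ₗ[Rᵐᵒᵖ] (W →ₗ[R] R)) : TopologicalSpace V :=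
  TopologicalSpace.induced (fun v (w : W) => κ v w)
    (@Pi.topologicalSpace W (fun _ => R) (fun _ => ⊥))

/-- Orthogonal in `W` of a subset of `V`. -/
def perpW {R V W : Type*} [Ring R] [AddCommGroup V] [Module Rᵐᵒᵖ V]
    [AddCommGroup W] [Module R W] (κ : V →ₗ[Rᵐᵒᵖ] (W →ₗ[R] R)) (X : Set V) : Set W :=
  {w : W | ∀ x ∈ X, κ x w = 0}

/-- Orthogonal in `V` of a subset of `W`. -/
def perpV {R V W : Type*} [Ring R] [AddCommGroup V] [Module Rᵐᵒᵖ V]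
    [AddCommGroup W] [Module R W] (κ : V →ₗ[Rᵐᵒᵖ] (W →ₗ[R] R)) (K : Set W) : Set V :=
  {v : V | ∀ w ∈ K, κ v w = 0}

/-- the topological closure of any subset `X ⊆ V` is contained in `X^⊥⊥`;
consequently every orthogonally closed right `R`-submodule of `V` is topologically closed. -/
theorem stmt_2 {R V W : Type*} [Ring R] [AddCommGroup V] [Module Rᵐᵒᵖ V]
    [AddCommGroup W] [Module R W] (κ : V →ₗ[Rᵐᵒᵖ] (W →ₗ[R] R)) :
    (∀ X : Set V, @closure V (linearWeakTopology κ) X ⊆ perpV κ (perpW κ X)) ∧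
    (∀ X : Submodule Rᵐᵒᵖ V, (X : Set V) = perpV κ (perpW κ (X : Set V)) →
      @IsClosed V (linearWeakTopology κ) (X : Set V)) := by
  letI : TopologicalSpace R := ⊥
  letI : TopologicalSpace (W → R) := @Pi.topologicalSpace W (fun _ => R) (fun _ => ⊥)
  letI : TopologicalSpace V := linearWeakTopology κ
  have key : ∀ X : Set V, closure X ⊆ perpV κ (perpW κ X) := by
    intro X v hv w hw
    -- the set of points pairing to κ v w against w is an open neighborhood of v
    set o : Set V := (fun v (w' : W) => κ v w') ⁻¹' ((Function.eval w) ⁻¹' {κ v w}) with ho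
    have hopen : IsOpen o := by
      apply isOpen_induced
      haveI : DiscreteTopology R := ⟨rfl⟩
      exact (continuous_apply (A := fun _ : W => R) w).isOpen_preimage _ (isOpen_discrete _)
    have hmem : v ∈ o := rfl
    obtain ⟨x, hxo, hxX⟩ := (mem_closure_iff.mp hv) o hopen hmem
    have : κ x w = κ v w := hxo
    rw [← this]
    exact hw x hxX
  refine ⟨key, fun X hX => ?_⟩
  have : closure (X : Set V) = X := by
    apply subset_antisymm
    · exact (key (X : Set V)).trans (le_of_eq hX.symm)
    · exact subset_closure
  rw [← this]; exact isClosed_closure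
end

section
/- Let P = (V, W) be a left R-pairing where R is right Noetherian. Then every open right R-submodule X of V (with respect to the linear weak topology) is R-cofinite, i.e. V/X is finitely generated as a right R-module. -/
/-- if `R` is right Noetherian, then every open right `R`-submodule `X ⊆ V`
(w.r.t. the linear weak topology) is `R`-cofinite, i.e. `V/X` is a finitely generated
right `R`-module. -/
theorem stmt_3 {R V W : Type*} [Ring R] [IsNoetherianRing Rᵐᵒᵖ]
    [AddCommGroup V] [Module Rᵐᵒᵖ V] [AddCommGroup W] [Module R W]
    (κ : V →ₗ[Rᵐᵒᵖ] (W →ₗ[R] R)) (X : Submodule Rᵐᵒᵖ V)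
    (hX : @IsOpen V (linearWeakTopology κ) (X : Set V)) :
    Module.Finite Rᵐᵒᵖ (V ⧸ X) := by
  letI : TopologicalSpace R := ⊥
  rw [linearWeakTopology, isOpen_induced_iff] at hX
  obtain ⟨t, ht, hpre⟩ := hX
  have h0 : (fun w : W => (κ 0) w) ∈ t := by
    have h : (0 : V) ∈ (fun v (w : W) => (κ v) w) ⁻¹' t := by
      rw [hpre]; exact X.zero_mem
    exact h
  rw [isOpen_pi_iff] at ht
  obtain ⟨I, u, hu, hsub⟩ := ht _ h0
  let φ : V →ₗ[Rᵐᵒᵖ] (I → R) :=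
    { toFun := fun v i => κ v i.1
      map_add' := by intro x y; ext i; simp
      map_smul' := by intro c x; ext i; simp }
  have hker : LinearMap.ker φ ≤ X := by
    intro v hv
    have hmem : (fun w : W => (κ v) w) ∈ t := by
      apply hsub
      intro i hi
      have hv0 : (κ v) i = 0 := by
        have := congrFun (LinearMap.mem_ker.mp hv) ⟨i, hi⟩
        simpa [φ] using this
      show (κ v) i ∈ u i
      rw [hv0]
      simpa using (hu i hi).2
    have h : v ∈ (fun v (w : W) => (κ v) w) ⁻¹' t := hmem
    rwa [hpre] at h
  haveI : IsNoetherian Rᵐᵒᵖ R := by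
    refine isNoetherian_of_linearEquiv (R := Rᵐᵒᵖ) (M := Rᵐᵒᵖ)
      ({ MulOpposite.opAddEquiv.symm with map_smul' := fun c x => rfl } : Rᵐᵒᵖ ≃ₗ[Rᵐᵒᵖ] R)
  haveI : IsNoetherian Rᵐᵒᵖ (I → R) := inferInstance
  have hfin : Module.Finite Rᵐᵒᵖ (V ⧸ LinearMap.ker φ) := by
    have hinj : Function.Injective ((LinearMap.ker φ).liftQ φ le_rfl) := by
      rw [← LinearMap.ker_eq_bot, Submodule.ker_liftQ_eq_bot]
      exact le_rfl
    exact Module.Finite.of_injective _ hinj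
  have hle : LinearMap.ker φ ≤ X.comap LinearMap.id := hker
  have hsurj : Function.Surjective (Submodule.mapQ (LinearMap.ker φ) X LinearMap.id hle) := by
    intro x
    obtain ⟨v, rfl⟩ := Submodule.mkQ_surjective X x
    exact ⟨Submodule.Quotient.mk v, by simp [Submodule.mapQ_apply]⟩
  exact Module.Finite.of_surjective _ hsurj
end

section
/- Let N be an R-module such that R is N-injective (every R-linear map from a submodule of N to R extends to N). Then for all submodules L₁, L₂ ⊆ N, An(L₁ ∩ L₂) = An(L₁) + An(L₂) in Hom_R(N, R). -/
/-- if `R` is `N`-injective, then `An(L₁ ∩ L₂) = An(L₁) + An(L₂)` in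
`Hom_R(N, R)`. -/
theorem stmt_5 {R N : Type*} [Ring R] [AddCommGroup N] [Module R N]
    (hNinj : ∀ (K : Submodule R N) (f : K →ₗ[R] R), ∃ g : N →ₗ[R] R, ∀ k : K, g k = f k)
    (L₁ L₂ : Submodule R N) :
    {f : N →ₗ[R] R | ∀ x ∈ L₁ ⊓ L₂, f x = 0} =
      {f : N →ₗ[R] R | ∃ f₁ f₂ : N →ₗ[R] R,
        (∀ x ∈ L₁, f₁ x = 0) ∧ (∀ x ∈ L₂, f₂ x = 0) ∧ f = f₁ + f₂} := by
  ext f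
  simp only [Set.mem_setOf_eq]
  constructor
  · intro hf
    -- f restricted to L₁ kills comap L₁.subtype (L₁ ⊓ L₂), lift to quotient
    set e := LinearMap.quotientInfEquivSupQuotient L₁ L₂
    have hker : Submodule.comap L₁.subtype L₁ ⊓ Submodule.comap L₁.subtype L₂ ≤
        LinearMap.ker (f.comp L₁.subtype) := by
      intro x hx
      simpa using hf x hx
    set f' : (L₁ ⧸ (Submodule.comap L₁.subtype L₁ ⊓ Submodule.comap L₁.subtype L₂)) →ₗ[R] R :=
      Submodule.liftQ _ (f.comp L₁.subtype) hker with hf'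
    set h : ↥(L₁ ⊔ L₂) →ₗ[R] R :=
      (f'.comp (e.symm : _ →ₗ[R] _)).comp
        (Submodule.mkQ (Submodule.comap (L₁ ⊔ L₂).subtype L₂)) with hh
    obtain ⟨g, hg⟩ := hNinj (L₁ ⊔ L₂) h
    refine ⟨f - g, g, ?_, ?_, by abel⟩
    · intro x hx
      have hx' : x ∈ L₁ ⊔ L₂ := Submodule.mem_sup_left hx
      have := hg ⟨x, hx'⟩
      simp only [hh, hf', LinearMap.comp_apply, Submodule.mkQ_apply] at this
      erw [LinearMap.quotientInfEquivSupQuotient_symm_apply_left L₁ L₂ ⟨x, hx'⟩ hx] at this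
      simp only [LinearEquiv.coe_coe] at this
      rw [Submodule.liftQ_apply] at this
      simp only [LinearMap.comp_apply, Submodule.subtype_apply] at this
      simp [this]
    · intro x hx
      have hx' : x ∈ L₁ ⊔ L₂ := Submodule.mem_sup_right hx
      have := hg ⟨x, hx'⟩
      simp only [hh, hf', LinearMap.comp_apply, Submodule.mkQ_apply] at this
      erw [LinearMap.quotientInfEquivSupQuotient_symm_apply_right L₁ L₂ (x := ⟨x, hx'⟩) hx] at this
      simpa using this
  · rintro ⟨f₁, f₂, h₁, h₂, rfl⟩ x hx
    simp [LinearMap.add_apply, h₁ x hx.1, h₂ x hx.2]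
end

section
/- Let P = (V, W) be a left R-pairing with V ⊆ *W (κ_P injective), and suppose R is left self-injective (i.e. the left R-module R is injective). Then every finitely generated right R-submodule X ⊆ V is closed in the linear weak topology on V. -/
/-- if `κ_P : V → *W` is injective and `_R R` is injective (left
self-injective), then every finitely generated right `R`-submodule `X ⊆ V` is closed
in the linear weak topology. -/
theorem stmt_6 {R V W : Type*} [Ring R] [AddCommGroup V] [Module Rᵐᵒᵖ V]
    [AddCommGroup W] [Module R W] (hRinj : Module.Injective R R)
    (κ : V →ₗ[Rᵐᵒᵖ] (W →ₗ[R] R)) (hκ : Function.Injective κ)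
    (X : Submodule Rᵐᵒᵖ V) (hX : X.FG) :
    @IsClosed V (linearWeakTopology κ) (X : Set V) := by
  classical
  letI : TopologicalSpace R := ⊥
  haveI : DiscreteTopology R := ⟨rfl⟩
  letI : TopologicalSpace V := linearWeakTopology κ
  haveI := hRinj
  obtain ⟨S, hS⟩ := hX
  rw [← closure_subset_iff_isClosed]
  intro v hv
  -- Step 1: for every `w`, some `x ∈ X` agrees with `v` at `w`.
  have key : ∀ w : W, ∃ x ∈ X, κ x w = κ v w := by
    intro w
    have hopen : IsOpen {u : V | κ u w = κ v w} := by
      have heq : {u : V | κ u w = κ v w} =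
          (fun u (w : W) => κ u w) ⁻¹' ((fun g : W → R => g w) ⁻¹' {κ v w}) := rfl
      rw [heq]
      exact ((continuous_apply w).comp continuous_induced_dom).isOpen_preimage _
        (isOpen_discrete _)
    obtain ⟨x, hx1, hx2⟩ := (mem_closure_iff.mp hv) _ hopen (by simp)
    exact ⟨x, hx2, hx1⟩
  let φ : W →ₗ[R] (S → R) := LinearMap.pi fun i => κ (i : V)
  -- Step 2: `ker φ ≤ ker (κ v)`.
  have hker : ∀ w ∈ LinearMap.ker φ, w ∈ LinearMap.ker (κ v) := by
    intro w hw
    have hS0 : ∀ i : S, κ (i : V) w = 0 := by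
      intro i
      have := LinearMap.mem_ker.mp hw
      exact congrFun this i
    obtain ⟨x, hxX, hxw⟩ := key w
    have hx0 : ∀ x ∈ X, κ x w = 0 := by
      intro x hx
      rw [← hS] at hx
      induction hx using Submodule.span_induction with
      | mem y hy => exact hS0 ⟨y, hy⟩
      | zero => simp
      | add a b _ _ ha hb => simp [ha, hb]
      | smul c a _ ha => simp [MulOpposite.smul_eq_mul_unop, ha]
    rw [LinearMap.mem_ker, ← hxw]
    exact hx0 x hxX
  -- Step 3: factor `κ v` through `im φ ⊆ S → R` and extend using injectivity of `R`.
  let j : (W ⧸ LinearMap.ker φ) →ₗ[R] (S → R) := (LinearMap.ker φ).liftQ φ le_rfl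
  have hj : Function.Injective j := by
    rw [← LinearMap.ker_eq_bot]
    exact Submodule.ker_liftQ_eq_bot _ _ _ le_rfl
  let g : (W ⧸ LinearMap.ker φ) →ₗ[R] R := (LinearMap.ker φ).liftQ (κ v) hker
  obtain ⟨h, hh⟩ := Module.Injective.extension_property R R (W ⧸ LinearMap.ker φ) (S → R) j hj g
  -- Step 4: reconstruct the element of `X`.
  let r : S → R := fun i => h (Pi.single i 1)
  let x : V := ∑ i : S, MulOpposite.op (r i) • (i : V)
  have hxX : x ∈ X := Submodule.sum_mem _ fun i _ =>
    Submodule.smul_mem _ _ (hS ▸ Submodule.subset_span i.2)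
  have hκeq : κ v = κ x := by
    ext w
    have h1 : κ v w = h (φ w) := by
      have h2 : h (j (Submodule.Quotient.mk w)) = g (Submodule.Quotient.mk w) :=
        LinearMap.congr_fun hh _
      simpa [j, g, Submodule.liftQ_apply] using h2.symm
    have h2 : φ w = ∑ i : S, (κ (i : V) w) • (Pi.single i (1 : R) : S → R) := by
      ext i
      simp [φ, Finset.sum_apply, Pi.single_apply, mul_ite, eq_comm]
    rw [h1, h2, map_sum]
    simp [x, map_sum, LinearMap.sum_apply, MulOpposite.smul_eq_mul_unop, smul_eq_mul, r]
  have : v = x := hκ hκeq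
  rw [this]
  exact hxX
end

section
/- Let R be a ring such that R_R is an injective cogenerator and let P = (V, W) be a left R-pairing. Then the closure of any right R-submodule X ⊆ V in the linear weak topology equals X^⊥⊥. -/
open MulOpposite in
/-- In the right `R`-module `ι → R`, scaling `Pi.single i 1` by `op c` gives `Pi.single i c`. -/
lemma stmt7_op_smul_single {R : Type u} [Ring R] {ι : Type u} [DecidableEq ι] (i : ι) (c : R) :
    (op c) • Pi.single (M := fun _ => R) i (1:R) = Pi.single i c := by
  ext j
  rcases eq_or_ne j i with rfl | h
  · simp [Pi.single_apply]
  · simp [Pi.single_apply, h]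

/-- Key finite approximation: if `v ∈ X^⊥⊥` then on any finite set of functionals
`v` agrees with some element of `X`.  Only uses the cogenerator property. -/
lemma stmt7_key_approx {R V W : Type u} [Ring R]
    [AddCommGroup V] [Module Rᵐᵒᵖ V] [AddCommGroup W] [Module R W]
    (hcog : ∀ (M : Type u) [AddCommGroup M] [Module Rᵐᵒᵖ M] (m : M), m ≠ 0 →
      ∃ f : M →ₗ[Rᵐᵒᵖ] R, f m ≠ 0)
    (κ : V →ₗ[Rᵐᵒᵖ] (W →ₗ[R] R)) (X : Submodule Rᵐᵒᵖ V) (v : V)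
    (hv : v ∈ perpV κ (perpW κ (X : Set V)))
    (F : Finset W) : ∃ x ∈ X, ∀ w ∈ F, κ x w = κ v w := by
  classical
  set φ : V →ₗ[Rᵐᵒᵖ] (↥F → R) :=
    { toFun := fun v' i => κ v' i.1
      map_add' := by intro a b; ext i; simp
      map_smul' := by intro r a; ext i; simp } with hφ
  set N : Submodule Rᵐᵒᵖ (↥F → R) := X.map φ with hN
  have hmem : φ v ∈ N := by
    by_contra h
    have hm : N.mkQ (φ v) ≠ 0 := by
      simpa [Submodule.mkQ_apply, Submodule.Quotient.mk_eq_zero] using h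
    obtain ⟨f, hf⟩ := hcog ((↥F → R) ⧸ N) (N.mkQ (φ v)) hm
    set g : (↥F → R) →ₗ[Rᵐᵒᵖ] R := f.comp N.mkQ with hg
    have hgx : ∀ x : ↥F → R, g x = ∑ i : ↥F, g (Pi.single i 1) * x i := by
      intro x
      conv_lhs => rw [← Finset.univ_sum_single x]
      rw [map_sum]
      refine Finset.sum_congr rfl fun i _ => ?_
      rw [← stmt7_op_smul_single i (x i), map_smul]
      simp [MulOpposite.smul_eq_mul_unop]
    set w₀ : W := ∑ i : ↥F, g (Pi.single i 1) • (i : W) with hw₀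
    have hκw₀ : ∀ v' : V, κ v' w₀ = g (φ v') := by
      intro v'
      rw [hw₀, map_sum, hgx]
      refine Finset.sum_congr rfl fun i _ => ?_
      simp [hφ]
    have hperp : w₀ ∈ perpW κ (X : Set V) := by
      intro x hx
      rw [hκw₀]
      have : φ x ∈ N := Submodule.mem_map_of_mem hx
      simp [hg, (Submodule.Quotient.mk_eq_zero N).mpr this, Submodule.mkQ_apply]
    have := hv w₀ hperp
    rw [hκw₀ v] at this
    exact hf this
  obtain ⟨x, hx, hxv⟩ := hmem
  refine ⟨x, hx, fun w hw => ?_⟩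
  have := congrFun hxv ⟨w, hw⟩
  simpa [hφ] using this

/-- if `R_R` is an injective cogenerator (as a right `R`-module), then
the closure of any right `R`-submodule `X ⊆ V` in the linear weak topology is `X^⊥⊥`. -/
theorem stmt_7 {R : Type u} {V : Type u} {W : Type u} [Ring R]
    [AddCommGroup V] [Module Rᵐᵒᵖ V] [AddCommGroup W] [Module R W]
    (hRinj : Module.Injective Rᵐᵒᵖ R)
    (hcog : ∀ (M : Type u) [AddCommGroup M] [Module Rᵐᵒᵖ M] (m : M), m ≠ 0 →
      ∃ f : M →ₗ[Rᵐᵒᵖ] R, f m ≠ 0)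
    (κ : V →ₗ[Rᵐᵒᵖ] (W →ₗ[R] R)) (X : Submodule Rᵐᵒᵖ V) :
    @closure V (linearWeakTopology κ) (X : Set V) = perpV κ (perpW κ (X : Set V)) := by
  classical
  letI tR : TopologicalSpace R := ⊥
  haveI : DiscreteTopology R := ⟨rfl⟩
  letI tV : TopologicalSpace V := linearWeakTopology κ
  set f : V → (W → R) := fun v w => κ v w with hf
  apply le_antisymm
  · -- closure ⊆ perp: the perp set is closed and contains X
    apply closure_minimal
    · intro x hx w hw
      exact hw x hx
    · have : perpV κ (perpW κ (X : Set V)) =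
          f ⁻¹' (⋂ w ∈ perpW κ (X : Set V), {g : W → R | g w = 0}) := by
        ext v
        simp [perpV, f]
      rw [this]
      apply IsClosed.preimage
      · exact continuous_induced_dom
      · exact isClosed_biInter fun w _ =>
          (isClosed_discrete {0}).preimage (continuous_apply w)
  · intro v hv
    rw [mem_closure_iff_nhds]
    intro t ht
    have hnhds : (nhds v : Filter V) = Filter.comap f (nhds (f v)) := nhds_induced f v
    rw [hnhds, Filter.mem_comap] at ht
    obtain ⟨u, hu, hut⟩ := ht
    rw [nhds_pi] at hu
    rw [Filter.mem_pi] at hu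
    obtain ⟨I, hIfin, t', ht', hsub⟩ := hu
    obtain ⟨x, hx, hxv⟩ := stmt7_key_approx hcog κ X v hv hIfin.toFinset
    refine ⟨x, hut ?_, hx⟩
    apply hsub
    intro w hw
    have hxw : f x w = f v w := hxv w (hIfin.mem_toFinset.mpr hw)
    rw [hxw]
    have := ht' w
    rwa [nhds_discrete, Filter.mem_pure] at this
end

section
/- Let R_R be an injective cogenerator and P = (V, W) a left R-pairing. For right R-submodules X ⊆ Y ⊆ V, X is dense in Y (with respect to the linear weak topology on V) if and only if X^⊥ = Y^⊥. In particular, if χ_P : W → V* is injective, then X ⊆ V is dense if and only if X^⊥ = 0. -/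
section aux
variable {R V W : Type u} [Ring R] [AddCommGroup V] [Module Rᵐᵒᵖ V]
    [AddCommGroup W] [Module R W]

lemma aux_mem_closure_iff (κ : V →ₗ[Rᵐᵒᵖ] (W →ₗ[R] R)) (X : Set V) (v : V) :
    v ∈ @closure V (linearWeakTopology κ) X ↔
      ∀ F : Finset W, ∃ x ∈ X, ∀ w ∈ F, κ x w = κ v w := by
  letI : TopologicalSpace R := ⊥
  haveI : DiscreteTopology R := ⟨rfl⟩
  letI : TopologicalSpace V := linearWeakTopology κ
  rw [mem_closure_iff]
  constructor
  · intro h F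
    have hopen : IsOpen ((fun v' (w : W) => κ v' w) ⁻¹'
        ((F : Set W).pi (fun w => {κ v w}))) := by
      apply isOpen_induced
      exact isOpen_set_pi F.finite_toSet (fun w _ => isOpen_discrete _)
    obtain ⟨x, hx1, hx2⟩ := h _ hopen (by
      intro w hw
      simp)
    exact ⟨x, hx2, fun w hw => hx1 w hw⟩
  · intro h o ho hvo
    obtain ⟨U, hU, rfl⟩ := isOpen_induced_iff.mp ho
    obtain ⟨I, u, hIu, hsub⟩ := isOpen_pi_iff.mp hU _ hvo
    obtain ⟨x, hxX, hx⟩ := h I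
    refine ⟨x, ?_, hxX⟩
    apply hsub
    intro w hw
    show κ x w ∈ u w
    rw [hx w hw]
    exact (hIu w hw).2

lemma aux_mem_closure_iff_perp
    (hcog : ∀ (M : Type u) [AddCommGroup M] [Module Rᵐᵒᵖ M] (m : M), m ≠ 0 →
      ∃ f : M →ₗ[Rᵐᵒᵖ] R, f m ≠ 0)
    (κ : V →ₗ[Rᵐᵒᵖ] (W →ₗ[R] R)) (X : Submodule Rᵐᵒᵖ V) (v : V) :
    v ∈ @closure V (linearWeakTopology κ) (X : Set V) ↔
      ∀ w ∈ perpW κ (X : Set V), κ v w = 0 := by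
  classical
  rw [aux_mem_closure_iff]
  constructor
  · intro h w hw
    obtain ⟨x, hxX, hx⟩ := h {w}
    rw [← hx w (Finset.mem_singleton_self w)]
    exact hw x hxX
  · intro hv F
    -- the map φ : V → (F → R)
    let φ : V →ₗ[Rᵐᵒᵖ] (↥F → R) :=
      { toFun := fun v' w => κ v' (w : W)
        map_add' := by intro a b; ext w; simp
        map_smul' := by intro r a; ext w; simp }
    by_contra hcon
    push_neg at hcon
    have hnotin : φ v ∉ Submodule.map φ X := by
      rintro ⟨x, hxX, hx⟩
      obtain ⟨w, hwF, hne⟩ := hcon x hxX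
      exact hne (by
        have := congrFun hx ⟨w, hwF⟩
        simpa [φ] using this)
    set N := Submodule.map φ X
    have hm : (Submodule.Quotient.mk (φ v) : (↥F → R) ⧸ N) ≠ 0 := by
      simpa [Submodule.Quotient.mk_eq_zero] using hnotin
    obtain ⟨g, hg⟩ := hcog ((↥F → R) ⧸ N) _ hm
    set f : (↥F → R) →ₗ[Rᵐᵒᵖ] R := g.comp N.mkQ with hf
    have hfX : ∀ x ∈ X, f (φ x) = 0 := by
      intro x hx
      have : φ x ∈ N := ⟨x, hx, rfl⟩
      show g (Submodule.Quotient.mk (φ x)) = 0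
      rw [(Submodule.Quotient.mk_eq_zero N).mpr this, map_zero]
    have hfv : f (φ v) ≠ 0 := hg
    -- f r = ∑ w, f (single w 1) * r w
    have hsingle : ∀ (w : ↥F) (c : R), f (Pi.single w c) = f (Pi.single w 1) * c := by
      intro w c
      have : Pi.single w c = (MulOpposite.op c) • (show ↥F → R from Pi.single w (1 : R)) := by
        ext w'
        by_cases h : w' = w <;> simp [Pi.single_apply, h, MulOpposite.smul_eq_mul_unop]
      rw [this, map_smul, MulOpposite.smul_eq_mul_unop, MulOpposite.unop_op]
    have hfr : ∀ r : ↥F → R, f r = ∑ w : ↥F, f (Pi.single w 1) * r w := by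
      intro r
      have hr : r = ∑ w : ↥F, Pi.single w (r w) := by
        ext w; simp [Finset.sum_apply, Pi.single_apply]
      calc f r = f (∑ w : ↥F, Pi.single w (r w)) := by rw [← hr]
        _ = ∑ w : ↥F, f (Pi.single w (r w)) := map_sum f _ _
        _ = ∑ w : ↥F, f (Pi.single w 1) * r w := by
            exact Finset.sum_congr rfl (fun w _ => hsingle w (r w))
    set w₀ : W := ∑ w : ↥F, f (Pi.single w 1) • (w : W) with hw₀
    have hkey : ∀ v' : V, κ v' w₀ = f (φ v') := by
      intro v'
      rw [hw₀, map_sum, hfr]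
      congr 1
      ext w
      rw [map_smul, smul_eq_mul]
      rfl
    have hw₀perp : w₀ ∈ perpW κ (X : Set V) := by
      intro x hx
      rw [hkey x]
      exact hfX x hx
    have := hv w₀ hw₀perp
    rw [hkey v] at this
    exact hfv this

end aux

/-- if `R_R` is an injective cogenerator, then for right `R`-submodules
`X ⊆ Y ⊆ V`, `X` is dense in `Y` iff `X^⊥ = Y^⊥`; and if `χ_P : W → V*` is injective,
then `X ⊆ V` is dense iff `X^⊥ = 0`. -/


theorem stmt_8 {R : Type u} {V : Type u} {W : Type u} [Ring R]
    [AddCommGroup V] [Module Rᵐᵒᵖ V] [AddCommGroup W] [Module R W]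
    (hRinj : Module.Injective Rᵐᵒᵖ R)
    (hcog : ∀ (M : Type u) [AddCommGroup M] [Module Rᵐᵒᵖ M] (m : M), m ≠ 0 →
      ∃ f : M →ₗ[Rᵐᵒᵖ] R, f m ≠ 0)
    (κ : V →ₗ[Rᵐᵒᵖ] (W →ₗ[R] R)) (X Y : Submodule Rᵐᵒᵖ V) (hXY : X ≤ Y) :
    ((Y : Set V) ⊆ @closure V (linearWeakTopology κ) (X : Set V) ↔
      perpW κ (X : Set V) = perpW κ (Y : Set V)) ∧
    (Function.Injective (fun (w : W) (v : V) => κ v w) →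
      (@Dense V (linearWeakTopology κ) (X : Set V) ↔ perpW κ (X : Set V) = {0})) := by
  have hch : ∀ v : V, v ∈ @closure V (linearWeakTopology κ) (X : Set V) ↔
      ∀ w ∈ perpW κ (X : Set V), κ v w = 0 := aux_mem_closure_iff_perp hcog κ X
  constructor
  · constructor
    · intro h
      ext w
      constructor
      · intro hw y hy
        exact ((hch y).mp (h hy)) w hw
      · intro hw x hx
        exact hw x (hXY hx)
    · intro heq y hy
      rw [hch y]
      intro w hw
      rw [heq] at hw
      exact hw y hy
  · intro hinj
    constructor
    · intro hd
      ext w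
      simp only [Set.mem_singleton_iff]
      constructor
      · intro hw
        apply hinj
        funext v
        show κ v w = κ v 0
        rw [map_zero]
        exact ((hch v).mp (hd v)) w hw
      · rintro rfl
        intro x _
        exact map_zero (κ x)
    · intro heq v
      rw [hch v]
      intro w hw
      rw [heq] at hw
      rw [hw, map_zero]
end

section
/- Let R_R be an injective cogenerator and P = (V, W) a left R-pairing. The closed right R-submodules of V with respect to the linear weak topology are exactly the submodules of the form K^⊥ where K ranges over arbitrary left R-submodules of W. -/
/-- Evaluation of the pairing at finitely many points, as a linear map. -/
def evalPi {R V W : Type*} [Ring R] [AddCommGroup V] [Module Rᵐᵒᵖ V]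
    [AddCommGroup W] [Module R W] (κ : V →ₗ[Rᵐᵒᵖ] (W →ₗ[R] R)) (I : Finset W) :
    V →ₗ[Rᵐᵒᵖ] (I → R) where
  toFun u := fun w => κ u w
  map_add' u v := by ext w; simp
  map_smul' r u := by ext w; simp

/-- if `R_R` is an injective cogenerator, then the closed right
`R`-submodules of `V` w.r.t. the linear weak topology are exactly those of the form
`K^⊥` for an arbitrary left `R`-submodule `K ⊆ W`. -/
theorem stmt_9 {R : Type u} {V : Type u} {W : Type u} [Ring R]
    [AddCommGroup V] [Module Rᵐᵒᵖ V] [AddCommGroup W] [Module R W]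
    (hRinj : Module.Injective Rᵐᵒᵖ R)
    (hcog : ∀ (M : Type u) [AddCommGroup M] [Module Rᵐᵒᵖ M] (m : M), m ≠ 0 →
      ∃ f : M →ₗ[Rᵐᵒᵖ] R, f m ≠ 0)
    (κ : V →ₗ[Rᵐᵒᵖ] (W →ₗ[R] R)) (X : Submodule Rᵐᵒᵖ V) :
    @IsClosed V (linearWeakTopology κ) (X : Set V) ↔
      ∃ K : Submodule R W, (X : Set V) = perpV κ (K : Set W) := by
  classical
  letI tR : TopologicalSpace R := ⊥
  haveI : DiscreteTopology R := ⟨rfl⟩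
  letI tV : TopologicalSpace V := linearWeakTopology κ
  constructor
  · intro hX
    -- the candidate submodule
    refine ⟨{ carrier := perpW κ (X : Set V)
              add_mem' := ?_
              zero_mem' := ?_
              smul_mem' := ?_ }, ?_⟩
    · intro a b ha hb x hx
      simp [perpW] at ha hb ⊢
      simp [ha x hx, hb x hx]
    · intro x hx; simp
    · intro r w hw x hx
      simp only [perpW, Set.mem_setOf_eq] at hw
      simp [hw x hx]
    · -- X = perpV (perpW X)
      apply Set.Subset.antisymm
      · intro x hx w hw
        exact hw x hx
      · intro v hv
        by_contra hvX
        -- extract a finite set from closedness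
        have hopen : IsOpen ((X : Set V)ᶜ) := hX.isOpen_compl
        rw [show tV = TopologicalSpace.induced (fun v (w : W) => κ v w)
              (@Pi.topologicalSpace W (fun _ => R) (fun _ => ⊥)) from rfl,
            isOpen_induced_iff] at hopen
        obtain ⟨S, hSopen, hSpre⟩ := hopen
        have hvS : (fun w : W => κ v w) ∈ S := by
          have : v ∈ ((X : Set V)ᶜ) := hvX
          rw [← hSpre] at this; exact this
        rw [isOpen_pi_iff] at hSopen
        obtain ⟨I, u, hu, hsub⟩ := hSopen _ hvS
        -- key property: anything agreeing with v on I is outside X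
        have key : ∀ x : V, (∀ w ∈ I, κ x w = κ v w) → x ∉ (X : Set V) := by
          intro x hxv hxX
          have hxS : (fun w : W => κ x w) ∈ S := by
            apply hsub
            intro w hw
            simpa [hxv w hw] using (hu w hw).2
          have : x ∈ ((X : Set V)ᶜ) := by rw [← hSpre]; exact hxS
          exact this hxX
        -- the quotient module
        set φ : V →ₗ[Rᵐᵒᵖ] (I → R) := evalPi κ I with hφ
        set N : Submodule Rᵐᵒᵖ (I → R) := Submodule.map φ X with hN
        have hvN : φ v ∉ N := by
          rintro ⟨x, hxX, hxv⟩
          refine key x ?_ hxX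
          intro w hw
          have := congrFun hxv ⟨w, hw⟩
          simpa [φ, evalPi] using this
        have hne : (N.mkQ (φ v) : (I → R) ⧸ N) ≠ 0 := by
          simpa [Submodule.Quotient.mk_eq_zero] using hvN
        obtain ⟨g, hg⟩ := hcog ((I → R) ⧸ N) (N.mkQ (φ v)) hne
        set h : (I → R) →ₗ[Rᵐᵒᵖ] R := g.comp N.mkQ with hh
        have hX0 : ∀ x ∈ (X : Set V), h (φ x) = 0 := by
          intro x hx
          have : φ x ∈ N := ⟨x, hx, rfl⟩
          simp only [hh, LinearMap.comp_apply]
          rw [show N.mkQ (φ x) = 0 by simpa [Submodule.Quotient.mk_eq_zero] using this]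
          simp
        have hv0 : h (φ v) ≠ 0 := hg
        -- express h via coefficients
        have hdecomp : ∀ f : I → R,
            h f = ∑ w : I, h (Pi.single w (1 : R)) * f w := by
          intro f
          conv_lhs => rw [← Finset.univ_sum_single f]
          rw [map_sum]
          refine Finset.sum_congr rfl fun w _ => ?_
          have : Pi.single w (f w) = (MulOpposite.op (f w)) • (Pi.single w (1 : R) : I → R) := by
            ext i
            by_cases hi : i = w
            · subst hi; simp
            · simp [Pi.single_apply, hi]
          rw [this, map_smul]
          simp [MulOpposite.smul_eq_mul_unop]
        -- the witness element of W
        set w₀ : W := ∑ w ∈ I.attach, h (Pi.single w (1 : R)) • (w : W) with hw₀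
        have hκw₀ : ∀ x : V, κ x w₀ = h (φ x) := by
          intro x
          rw [hdecomp (φ x), hw₀, map_sum, Finset.univ_eq_attach]
          refine Finset.sum_congr rfl fun w _ => ?_
          simp [φ, evalPi, smul_eq_mul]
        have hw₀K : w₀ ∈ perpW κ (X : Set V) := by
          intro x hx
          rw [hκw₀ x]
          exact hX0 x hx
        have : κ v w₀ = 0 := hv w₀ hw₀K
        rw [hκw₀ v] at this
        exact hv0 this
  · rintro ⟨K, hK⟩
    rw [hK]
    have hperp : perpV κ (K : Set W) =
        ⋂ w ∈ (K : Set W), (fun v : V => κ v w) ⁻¹' {0} := by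
      ext v
      simp [perpV]
    rw [hperp]
    refine isClosed_biInter fun w _ => ?_
    have hcont : Continuous (fun v : V => κ v w) := by
      have h1 : Continuous (fun v : V => fun w : W => κ v w) := continuous_induced_dom
      exact (continuous_apply w).comp h1
    exact (isClosed_singleton (x := (0 : R))).preimage hcont
end

section
/- Let W, W' be left R-modules, θ : W' → W an R-linear map, and θ* : *W → *W' the dual map. If _R R is W-injective, then θ*(An(K)) = An(θ^{-1}(K)) for every left R-submodule K ⊆ W. -/
/-- if `_R R` is `W`-injective, then for the dual map
`θ* : *W → *W'`, `f ↦ f ∘ θ`, of an `R`-linear map `θ : W' → W`, we have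
`θ*(An(K)) = An(θ⁻¹(K))` for every left `R`-submodule `K ⊆ W`. -/
theorem stmt_11 {R W W' : Type*} [Ring R]
    [AddCommGroup W] [Module R W] [AddCommGroup W'] [Module R W']
    (hWinj : ∀ (K : Submodule R W) (f : K →ₗ[R] R), ∃ g : W →ₗ[R] R, ∀ k : K, g k = f k)
    (θ : W' →ₗ[R] W) (K : Submodule R W) :
    (fun f : W →ₗ[R] R => f.comp θ) '' {f : W →ₗ[R] R | ∀ x ∈ K, f x = 0} =
      {g : W' →ₗ[R] R | ∀ x : W', θ x ∈ K → g x = 0} := by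
  ext g
  constructor
  · rintro ⟨f, hf, rfl⟩ x hx
    exact hf _ hx
  · intro hg
    set S : Submodule R W := LinearMap.range θ ⊔ K with hS
    let π0 : (W' × K) →ₗ[R] W :=
      θ.comp (LinearMap.fst R W' K) + K.subtype.comp (LinearMap.snd R W' K)
    have hπ0 : ∀ y : W' × K, π0 y = θ y.1 + (y.2 : W) := fun y => rfl
    have hmem : ∀ y : W' × K, π0 y ∈ S := by
      intro y
      rw [hπ0]
      exact Submodule.add_mem_sup (LinearMap.mem_range_self θ y.1) y.2.2
    let π : (W' × K) →ₗ[R] S := π0.codRestrict S hmem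
    have hsurj : Function.Surjective π := by
      rintro ⟨s, hs⟩
      rcases Submodule.mem_sup.mp hs with ⟨a, ⟨x, rfl⟩, b, hb, rfl⟩
      exact ⟨(x, ⟨b, hb⟩), rfl⟩
    let G : (W' × K) →ₗ[R] R := g.comp (LinearMap.fst R W' K)
    have hle : LinearMap.ker π ≤ LinearMap.ker G := by
      intro y hy
      have h0 : π0 y = 0 := by
        have := congrArg (Subtype.val) (hy : π y = 0)
        simpa [π, LinearMap.codRestrict] using this
      have : θ y.1 = -(y.2 : W) := by
        exact eq_neg_of_add_eq_zero_left h0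
      have hK : θ y.1 ∈ K := by
        rw [this]; exact K.neg_mem y.2.2
      simpa [G] using hg y.1 hK
    let E := π.quotKerEquivOfSurjective hsurj
    have hE : ∀ y : W' × K, E (Submodule.Quotient.mk y) = π y := fun y => rfl
    let h : S →ₗ[R] R :=
      ((LinearMap.ker π).liftQ G hle).comp E.symm.toLinearMap
    have hh : ∀ y : W' × K, h (π y) = G y := by
      intro y
      have : E.symm (π y) = Submodule.Quotient.mk y := by
        rw [← hE y, E.symm_apply_apply]
      simp only [h, LinearMap.comp_apply, LinearEquiv.coe_toLinearMap, this,
        Submodule.liftQ_apply]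
    obtain ⟨f, hf⟩ := hWinj S h
    refine ⟨f, ?_, ?_⟩
    · intro x hx
      have hxS : x ∈ S := Submodule.mem_sup_right hx
      have : (⟨x, hxS⟩ : S) = π (0, ⟨x, hx⟩) := by
        ext; simp [π, LinearMap.codRestrict, hπ0]
      have h2 : h (⟨x, hxS⟩ : S) = 0 := by
        rw [this, hh]; simp [G]
      simpa using (hf ⟨x, hxS⟩).trans h2
    · ext x
      have hxS : θ x ∈ S := Submodule.mem_sup_left (LinearMap.mem_range_self θ x)
      have h1 : (⟨θ x, hxS⟩ : S) = π (x, 0) := by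
        ext; simp [π, LinearMap.codRestrict, hπ0]
      have h2 : h (⟨θ x, hxS⟩ : S) = g x := by
        rw [h1, hh]; simp [G]
      simpa using (hf ⟨θ x, hxS⟩).trans h2
end

section
/- Let R be a ring with R_R an injective cogenerator and _R R injective (e.g. R a QF ring), and let W be a left R-module. Then for any finite family of right R-submodules X₁, ..., X_k ⊆ *W, the closure of X₁ + ... + X_k in the finite topology on *W equals the sum of the closures of the X_i. Hence any finite sum of closed right R-submodules of *W is closed. -/
/-- The finite topology on `*W = Hom_R(W, R)`, induced from the product topology
on `W → R` with `R` discrete. -/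
def finiteTopology (R W : Type*) [Ring R] [AddCommGroup W] [Module R W] :
    TopologicalSpace (W →ₗ[R] R) :=
  TopologicalSpace.induced (fun (f : W →ₗ[R] R) (w : W) => f w)
    (@Pi.topologicalSpace W (fun _ => R) (fun _ => ⊥))


open Topology Filter

universe u
variable {R : Type u} {W : Type u} [Ring R] [AddCommGroup W] [Module R W]

/-- The common kernel of a set of functionals. -/
def finKe (X : Set (W →ₗ[R] R)) : Submodule R W where
  carrier := {w | ∀ f ∈ X, f w = 0}
  add_mem' := fun ha hb f hf => by simp [map_add, ha f hf, hb f hf]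
  zero_mem' := fun f hf => by simp
  smul_mem' := fun c a ha f hf => by simp [map_smul, ha f hf]

/-- The annihilator of a submodule of `W` inside `*W`. -/
def finAn (L : Submodule R W) : Submodule Rᵐᵒᵖ (W →ₗ[R] R) where
  carrier := {f | ∀ w ∈ L, f w = 0}
  add_mem' := fun ha hb w hw => by simp [ha w hw, hb w hw]
  zero_mem' := fun w hw => rfl
  smul_mem' := fun c f hf w hw => by
    simp [LinearMap.smul_apply, MulOpposite.smul_eq_mul_unop, hf w hw]

lemma mem_finAn {L : Submodule R W} {f : W →ₗ[R] R} :
    f ∈ finAn L ↔ ∀ w ∈ L, f w = 0 := Iff.rfl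

lemma isClosed_finAn (L : Submodule R W) :
    @IsClosed _ (finiteTopology R W) ((finAn L : Set (W →ₗ[R] R))) := by
  letI : TopologicalSpace R := ⊥
  haveI : DiscreteTopology R := ⟨rfl⟩
  have h : (finAn L : Set (W →ₗ[R] R)) =
      (fun (f : W →ₗ[R] R) (w : W) => f w) ⁻¹'
        (⋂ w ∈ L, (fun x : W → R => x w) ⁻¹' {0}) := by
    ext f
    simp [finAn, Set.mem_iInter]
  rw [h]
  exact @IsClosed.preimage _ _ (finiteTopology R W) _ _
    continuous_induced_dom _
    (isClosed_biInter fun w _ => IsClosed.preimage (continuous_apply w) isClosed_singleton)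

lemma mem_closure_fin {S : Set (W →ₗ[R] R)} {f : W →ₗ[R] R} :
    f ∈ @closure _ (finiteTopology R W) S ↔
      ∀ F : Finset W, ∃ g ∈ S, ∀ w ∈ F, g w = f w := by
  letI : TopologicalSpace R := ⊥
  haveI : DiscreteTopology R := ⟨rfl⟩
  unfold finiteTopology
  letI : TopologicalSpace (W →ₗ[R] R) := TopologicalSpace.induced
    (fun (g : W →ₗ[R] R) (w : W) => g w) (@Pi.topologicalSpace W (fun _ => R) fun _ => ⊥)
  rw [mem_closure_iff_nhds,
      @nhds_induced (W → R) (W →ₗ[R] R) (@Pi.topologicalSpace W (fun _ => R) fun _ => ⊥)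
        (fun (g : W →ₗ[R] R) (w : W) => g w) f]
  constructor
  · intro h F
    have hO : IsOpen ((↑F : Set W).pi fun w => ({f w} : Set R)) :=
      isOpen_set_pi F.finite_toSet fun w _ => isOpen_discrete _
    have hmem : ((↑F : Set W).pi fun w => ({f w} : Set R)) ∈
        𝓝 (fun w => f w : W → R) := hO.mem_nhds (by intro w _; rfl)
    obtain ⟨g, hg1, hg2⟩ := h _ (Filter.preimage_mem_comap hmem)
    exact ⟨g, hg2, fun w hw => hg1 w hw⟩
  · intro h t ht
    obtain ⟨U, hU, hUt⟩ := Filter.mem_comap.mp ht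
    rw [nhds_pi] at hU
    obtain ⟨I, hIfin, t', ht', hsub⟩ := Filter.mem_pi.mp hU
    obtain ⟨g, hgS, hg⟩ := h hIfin.toFinset
    refine ⟨g, hUt ?_, hgS⟩
    apply hsub
    intro w hw
    have : g w = f w := hg w (hIfin.mem_toFinset.mpr hw)
    have hfw : f w ∈ t' w := by
      have := ht' w
      rw [nhds_discrete] at this
      exact this
    show g w ∈ t' w
    rw [hg w (hIfin.mem_toFinset.mpr hw)]
    exact hfw

/-- The evaluation map at `w`, as an `Rᵐᵒᵖ`-linear map. -/
def evalAt (w : W) : (W →ₗ[R] R) →ₗ[Rᵐᵒᵖ] R where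
  toFun f := f w
  map_add' a b := rfl
  map_smul' c f := rfl

lemma closure_eq_finAn_finKe
    (hcog : ∀ (M : Type u) [AddCommGroup M] [Module Rᵐᵒᵖ M] (m : M), m ≠ 0 →
      ∃ f : M →ₗ[Rᵐᵒᵖ] R, f m ≠ 0)
    (X : Submodule Rᵐᵒᵖ (W →ₗ[R] R)) :
    @closure _ (finiteTopology R W) (X : Set (W →ₗ[R] R)) =
      (finAn (finKe (X : Set (W →ₗ[R] R))) : Set (W →ₗ[R] R)) := by
  classical
  apply subset_antisymm
  · letI := finiteTopology R W
    apply closure_minimal _ (isClosed_finAn _)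
    exact fun f hf w hw => hw f hf
  · intro f hf
    rw [mem_closure_fin]
    intro F
    set ι := {w : W // w ∈ F} with hι
    let ρ : (W →ₗ[R] R) →ₗ[Rᵐᵒᵖ] (ι → R) :=
      { toFun := fun g i => g i.1
        map_add' := fun a b => by funext i; simp
        map_smul' := fun c g => by funext i; simp }
    have hmem : ρ f ∈ Submodule.map ρ X := by
      by_contra hmemn
      have h0 : (Submodule.Quotient.mk (ρ f) : (ι → R) ⧸ Submodule.map ρ X) ≠ 0 := by
        simpa [Submodule.Quotient.mk_eq_zero] using hmemn
      obtain ⟨φ, hφ⟩ := hcog _ _ h0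
      set ψ : (ι → R) →ₗ[Rᵐᵒᵖ] R := φ.comp (Submodule.map ρ X).mkQ with hψdef
      set c : ι → R := fun i => ψ (Pi.single i 1) with hc
      have hsingle : ∀ (i : ι) (r : R),
          Pi.single (M := fun _ : ι => R) i r = MulOpposite.op r • Pi.single i 1 := by
        intro i r
        funext j
        by_cases hji : j = i
        · subst hji; simp [MulOpposite.smul_eq_mul_unop]
        · simp [Pi.single_eq_of_ne hji, MulOpposite.smul_eq_mul_unop]
      have hψeq : ∀ x : ι → R, ψ x = ∑ i, c i * x i := by
        intro x
        conv_lhs => rw [← Finset.univ_sum_single x]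
        rw [map_sum]
        refine Finset.sum_congr rfl fun i _ => ?_
        rw [hsingle i (x i), map_smul, MulOpposite.smul_eq_mul_unop]
        rfl
      set w₀ : W := ∑ i : ι, c i • (i.1 : W) with hw₀
      have hρ : ∀ g : W →ₗ[R] R, g w₀ = ∑ i, c i * g i.1 := by
        intro g
        rw [hw₀, map_sum]
        exact Finset.sum_congr rfl fun i _ => by rw [map_smul, smul_eq_mul]
      have hKe : w₀ ∈ finKe (X : Set (W →ₗ[R] R)) := by
        intro g hg
        have : ψ (ρ g) = 0 := by
          rw [hψdef]
          simp only [LinearMap.comp_apply]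
          have : (Submodule.map ρ X).mkQ (ρ g) = 0 := by
            rw [Submodule.mkQ_apply, Submodule.Quotient.mk_eq_zero]
            exact Submodule.mem_map_of_mem hg
          rw [this, map_zero]
        calc g w₀ = ∑ i : ι, c i * g i.1 := hρ g
          _ = ψ (ρ g) := (hψeq (ρ g)).symm
          _ = 0 := this
      have hf0 : f w₀ = 0 := hf w₀ hKe
      have h2 : ψ (ρ f) = 0 := by
        calc ψ (ρ f) = ∑ i : ι, c i * f i.1 := hψeq (ρ f)
          _ = f w₀ := (hρ f).symm
          _ = 0 := hf0
      exact hφ h2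
    obtain ⟨g, hgX, hgf⟩ := hmem
    exact ⟨g, hgX, fun w hw => congrFun hgf ⟨w, hw⟩⟩

lemma finAn_top : finAn (⊤ : Submodule R W) = ⊥ := by
  apply le_antisymm
  · intro f hf
    have hf0 : f = 0 := by ext w; exact hf w trivial
    simp [hf0]
  · exact bot_le

lemma finAn_inf (hRinj' : Module.Injective R R) (L L' : Submodule R W) :
    finAn (L ⊓ L') = finAn L ⊔ finAn L' := by
  apply le_antisymm
  · intro f hf
    set π : (L × L') →ₗ[R] W := (L.subtype).coprod (L'.subtype) with hπ
    set φ₀ : (L × L') →ₗ[R] R := f.comp ((L.subtype).comp (LinearMap.fst R L L')) with hφ₀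
    have hker : LinearMap.ker π ≤ LinearMap.ker φ₀ := by
      rintro ⟨x, y⟩ hxy
      have hxy' : (x : W) + (y : W) = 0 := hxy
      have hx : (x : W) ∈ L ⊓ L' := by
        refine ⟨x.2, ?_⟩
        have hx' : (x : W) = -(y : W) := eq_neg_of_add_eq_zero_left hxy'
        rw [hx']; exact neg_mem y.2
      show φ₀ (x, y) = 0
      exact hf _ hx
    set q0 : ((L × L') ⧸ LinearMap.ker π) →ₗ[R] R := (LinearMap.ker π).liftQ φ₀ hker with hq0
    set e : ((L × L') ⧸ LinearMap.ker π) ≃ₗ[R] LinearMap.range π := π.quotKerEquivRange with he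
    set q : (LinearMap.range π) →ₗ[R] R := q0.comp (e.symm : _ →ₗ[R] _) with hq
    have hqval : ∀ v : L × L', ∀ (hm : π v ∈ LinearMap.range π), q ⟨π v, hm⟩ = f v.1 := by
      intro v hm
      have h1 : e (Submodule.Quotient.mk v) = ⟨π v, hm⟩ := by
        rw [he]
        exact Subtype.ext (π.quotKerEquivRange_apply_mk v)
      have h2 : e.symm ⟨π v, hm⟩ = Submodule.Quotient.mk v := by
        rw [← h1, LinearEquiv.symm_apply_apply]
      rw [hq, LinearMap.comp_apply]
      show q0 (e.symm ⟨π v, hm⟩) = f v.1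
      rw [h2, hq0, Submodule.liftQ_apply]
      rfl
    obtain ⟨h, hh⟩ := hRinj'.out (LinearMap.range π).subtype
      (Submodule.injective_subtype _) q
    have key : ∀ (v : L × L') (w : W) (hw : w ∈ LinearMap.range π),
        π v = w → h w = f v.1 := by
      intro v w hw hvw
      have h3 := hh ⟨w, hw⟩
      rw [Submodule.subtype_apply] at h3
      rw [h3]
      have hm : π v ∈ LinearMap.range π := hvw ▸ hw
      have h5 : (⟨w, hw⟩ : LinearMap.range π) = ⟨π v, hm⟩ := Subtype.ext hvw.symm
      rw [h5]
      exact hqval v hm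
    have hhL : ∀ x ∈ L, h x = f x := by
      intro x hx
      have hπx : π (⟨x, hx⟩, 0) = x := by simp [hπ]
      exact key (⟨x, hx⟩, 0) x ⟨(⟨x, hx⟩, 0), hπx⟩ hπx
    have hhL' : ∀ y ∈ L', h y = 0 := by
      intro y hy
      have hπy : π (0, ⟨y, hy⟩) = y := by simp [hπ]
      have := key (0, ⟨y, hy⟩) y ⟨(0, ⟨y, hy⟩), hπy⟩ hπy
      simpa using this
    have hmem : f = (f - h) + h := by abel
    rw [hmem]
    exact Submodule.add_mem _
      (Submodule.mem_sup_left (fun w hw => by simp [hhL w hw]))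
      (Submodule.mem_sup_right (fun w hw => hhL' w hw))
  · refine sup_le ?_ ?_ <;> intro f hf w hw
    · exact hf w hw.1
    · exact hf w hw.2

lemma fin_iInf_succ {α : Type*} [CompleteLattice α] {n : ℕ} (f : Fin (n + 1) → α) :
    ⨅ i, f i = f 0 ⊓ ⨅ i : Fin n, f i.succ := by
  apply le_antisymm
  · exact le_inf (iInf_le _ 0) (le_iInf fun i => iInf_le _ i.succ)
  · refine le_iInf fun i => ?_
    rcases Fin.eq_zero_or_eq_succ i with h | ⟨j, rfl⟩
    · rw [h]; exact inf_le_left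
    · exact inf_le_right.trans (iInf_le _ j)

lemma fin_iSup_succ {α : Type*} [CompleteLattice α] {n : ℕ} (f : Fin (n + 1) → α) :
    ⨆ i, f i = f 0 ⊔ ⨆ i : Fin n, f i.succ := by
  apply le_antisymm
  · refine iSup_le fun i => ?_
    rcases Fin.eq_zero_or_eq_succ i with h | ⟨j, rfl⟩
    · rw [h]; exact le_sup_left
    · exact (le_iSup (fun i : Fin n => f i.succ) j).trans le_sup_right
  · exact sup_le (le_iSup _ 0) (iSup_le fun i => le_iSup _ i.succ)

lemma finAn_iInf (hRinj' : Module.Injective R R) :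
    ∀ (n : ℕ) (L : Fin n → Submodule R W), finAn (⨅ i, L i) = ⨆ i, finAn (L i)
  | 0, L => by
      rw [iInf_of_empty, iSup_of_empty, finAn_top]
  | (n + 1), L => by
      rw [fin_iInf_succ, finAn_inf hRinj', finAn_iInf hRinj' n (fun i => L i.succ),
        fin_iSup_succ (fun i => finAn (L i))]

lemma finKe_iSup {n : ℕ} (X : Fin n → Submodule Rᵐᵒᵖ (W →ₗ[R] R)) :
    finKe ((⨆ i, X i : Submodule Rᵐᵒᵖ (W →ₗ[R] R)) : Set (W →ₗ[R] R)) =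
      ⨅ i, finKe ((X i : Set (W →ₗ[R] R))) := by
  apply le_antisymm
  · refine le_iInf fun i => ?_
    intro w hw g hg
    exact hw g (Submodule.mem_iSup_of_mem i hg)
  · intro w hw g hg
    have hle : (⨆ i, X i : Submodule Rᵐᵒᵖ (W →ₗ[R] R)) ≤ LinearMap.ker (evalAt w) :=
      iSup_le fun i g' hg' => by
        have := Submodule.mem_iInf (fun i => finKe ((X i : Set (W →ₗ[R] R)))) |>.mp hw i
        exact this g' hg'
    exact hle hg

lemma mem_iSup_fin {M : Type u} [AddCommGroup M] [Module Rᵐᵒᵖ M] {n : ℕ}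
    (S : Fin n → Submodule Rᵐᵒᵖ M) (x : M) :
    x ∈ ⨆ i, S i ↔ ∃ g : Fin n → M, (∀ i, g i ∈ S i) ∧ x = ∑ i, g i := by
  constructor
  · intro hx
    obtain ⟨ff, hff, hsum⟩ := (Submodule.mem_iSup_iff_exists_finsupp _ _).mp hx
    refine ⟨ff, hff, ?_⟩
    rw [← hsum, Finsupp.sum_fintype]
    intro; rfl
  · rintro ⟨g, hg, rfl⟩
    exact Submodule.sum_mem _ fun i _ => Submodule.mem_iSup_of_mem i (hg i)

/-- if `R_R` is an injective cogenerator and `_R R` is injective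
(e.g. `R` a QF ring), then for a finite family of right `R`-submodules
`X₁, ..., X_n ⊆ *W`, the closure of their sum in the finite topology is the sum of their
closures; hence a finite sum of closed right `R`-submodules of `*W` is closed. -/
theorem stmt_12 {R : Type u} {W : Type u} [Ring R] [AddCommGroup W] [Module R W]
    (hRinj : Module.Injective Rᵐᵒᵖ R) (hRinj' : Module.Injective R R)
    (hcog : ∀ (M : Type u) [AddCommGroup M] [Module Rᵐᵒᵖ M] (m : M), m ≠ 0 →
      ∃ f : M →ₗ[Rᵐᵒᵖ] R, f m ≠ 0)
    (n : ℕ) (X : Fin n → Submodule Rᵐᵒᵖ (W →ₗ[R] R)) :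
    @closure _ (finiteTopology R W) ((⨆ i, X i : Submodule Rᵐᵒᵖ (W →ₗ[R] R)) : Set (W →ₗ[R] R)) =
      {f : W →ₗ[R] R | ∃ g : Fin n → (W →ₗ[R] R),
        (∀ i, g i ∈ @closure _ (finiteTopology R W) ((X i : Set (W →ₗ[R] R)))) ∧
        f = ∑ i, g i} ∧
    ((∀ i, @IsClosed _ (finiteTopology R W) ((X i : Set (W →ₗ[R] R)))) →
      @IsClosed _ (finiteTopology R W)
        ((⨆ i, X i : Submodule Rᵐᵒᵖ (W →ₗ[R] R)) : Set (W →ₗ[R] R))) := by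
  classical
  letI := finiteTopology R W
  have h1 : ∀ i, @closure _ (finiteTopology R W) ((X i : Set (W →ₗ[R] R))) =
      (finAn (finKe ((X i : Set (W →ₗ[R] R)))) : Set (W →ₗ[R] R)) :=
    fun i => closure_eq_finAn_finKe hcog (X i)
  have h2 : @closure _ (finiteTopology R W)
      ((⨆ i, X i : Submodule Rᵐᵒᵖ (W →ₗ[R] R)) : Set (W →ₗ[R] R)) =
      ((⨆ i, finAn (finKe ((X i : Set (W →ₗ[R] R)))) :
        Submodule Rᵐᵒᵖ (W →ₗ[R] R)) : Set (W →ₗ[R] R)) := by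
    rw [closure_eq_finAn_finKe hcog, finKe_iSup, finAn_iInf hRinj']
  have hpart1 : @closure _ (finiteTopology R W)
      ((⨆ i, X i : Submodule Rᵐᵒᵖ (W →ₗ[R] R)) : Set (W →ₗ[R] R)) =
      {f : W →ₗ[R] R | ∃ g : Fin n → (W →ₗ[R] R),
        (∀ i, g i ∈ @closure _ (finiteTopology R W) ((X i : Set (W →ₗ[R] R)))) ∧
        f = ∑ i, g i} := by
    rw [h2]
    ext f
    simp only [SetLike.mem_coe, Set.mem_setOf_eq]
    rw [mem_iSup_fin]
    constructor
    · rintro ⟨g, hg, rfl⟩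
      exact ⟨g, fun i => by rw [h1 i]; exact hg i, rfl⟩
    · rintro ⟨g, hg, rfl⟩
      refine ⟨g, fun i => ?_, rfl⟩
      have hgi := hg i
      rw [h1 i] at hgi
      exact hgi
  refine ⟨hpart1, fun hcl => ?_⟩
  have hset : ((⨆ i, X i : Submodule Rᵐᵒᵖ (W →ₗ[R] R)) : Set (W →ₗ[R] R)) =
      @closure _ (finiteTopology R W)
        ((⨆ i, X i : Submodule Rᵐᵒᵖ (W →ₗ[R] R)) : Set (W →ₗ[R] R)) := by
    rw [hpart1]
    ext f
    simp only [SetLike.mem_coe, Set.mem_setOf_eq]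
    rw [mem_iSup_fin]
    constructor
    · rintro ⟨g, hg, rfl⟩
      exact ⟨g, fun i => subset_closure (hg i), rfl⟩
    · rintro ⟨g, hg, rfl⟩
      refine ⟨g, fun i => ?_, rfl⟩
      have hgi := hg i
      rw [(hcl i).closure_eq] at hgi
      exact hgi
  rw [hset]
  exact isClosed_closure
end

section
/- Let P = (V, W) be a left R-pairing satisfying the α-condition, i.e. for every right R-module M the map α_M^P : M ⊗_R W → Hom_{-R}(V, M), m ⊗ w ↦ [v ↦ m⟨v, w⟩], is injective. Then W is flat as a left R-module. -/
open TensorProduct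

noncomputable def alphaMap {R V W : Type*} [CommRing R] [AddCommGroup V] [Module R V]
    [AddCommGroup W] [Module R W] (κ : V →ₗ[R] W →ₗ[R] R)
    (M : Type*) [AddCommGroup M] [Module R M] : M ⊗[R] W →ₗ[R] (V →ₗ[R] M) :=
  TensorProduct.lift <| LinearMap.mk₂ R (fun m w => (κ.flip w).smulRight m)
    (fun m₁ m₂ w => by
      ext v
      simp only [LinearMap.smulRight_apply, LinearMap.add_apply, smul_add])
    (fun c m w => by
      ext v
      simp only [LinearMap.smulRight_apply, LinearMap.smul_apply]
      rw [smul_comm])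
    (fun m w₁ w₂ => by
      ext v
      simp only [LinearMap.smulRight_apply, LinearMap.add_apply, map_add,
        LinearMap.flip_apply, add_smul])
    (fun c m w => by
      ext v
      simp only [LinearMap.smulRight_apply, LinearMap.smul_apply, map_smul,
        LinearMap.flip_apply, smul_smul, smul_eq_mul])

/-- if the left `R`-pairing `P = (V, W)` satisfies the `α`-condition,
then `W` is flat as an `R`-module. -/
theorem stmt_13 {R V W : Type u} [CommRing R] [AddCommGroup V] [Module R V]
    [AddCommGroup W] [Module R W] (κ : V →ₗ[R] W →ₗ[R] R)
    (hα : ∀ (M : Type u) [AddCommGroup M] [Module R M],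
      Function.Injective (alphaMap κ M)) :
    Module.Flat R W := by
  rw [Module.Flat.iff_rTensor_injective']
  intro I
  have hcomm : ∀ x : I ⊗[R] W,
      alphaMap κ R (LinearMap.rTensor W I.subtype x)
        = I.subtype ∘ₗ (alphaMap κ I x) := by
    intro x
    induction x using TensorProduct.induction_on with
    | zero => simp
    | tmul m w =>
        ext v
        simp [alphaMap]
    | add a b ha hb =>
        rw [map_add, map_add, ha, hb, map_add, LinearMap.comp_add]
  intro x y hxy
  apply hα ↥I
  have h := (hcomm x).symm.trans ((congrArg _ hxy).trans (hcomm y))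
  ext v
  have := congrArg (fun f => f v) h
  simpa using this
end

section
/- Let P = (V, W) be a left R-pairing satisfying the α-condition. Then for every right R-module M, every R-submodule N ⊆ M, and every element Σ mᵢ ⊗ wᵢ ∈ M ⊗_R W: Σ mᵢ ⊗ wᵢ lies in the image of N ⊗_R W → M ⊗_R W if and only if Σ mᵢ⟨v, wᵢ⟩ ∈ N for all v ∈ V. -/
open TensorProduct

lemma alphaMap_natural {R V W : Type*} [CommRing R] [AddCommGroup V] [Module R V]
    [AddCommGroup W] [Module R W] (κ : V →ₗ[R] W →ₗ[R] R)
    {M M' : Type*} [AddCommGroup M] [Module R M] [AddCommGroup M'] [Module R M']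
    (f : M →ₗ[R] M') (x : M ⊗[R] W) (v : V) :
    alphaMap κ M' (f.rTensor W x) v = f (alphaMap κ M x v) := by
  induction x using TensorProduct.induction_on with
  | zero => simp
  | tmul m w => simp [alphaMap]
  | add a b ha hb => simp [ha, hb]

/-- if `P = (V, W)` satisfies the `α`-condition, then for every right
`R`-module `M`, submodule `N ⊆ M`, and `x ∈ M ⊗_R W`: `x` lies in the image of
`N ⊗_R W → M ⊗_R W` iff `Σ mᵢ⟨v, wᵢ⟩ ∈ N` for all `v ∈ V`. -/
theorem stmt_14 {R V W : Type u} [CommRing R] [AddCommGroup V] [Module R V]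
    [AddCommGroup W] [Module R W] (κ : V →ₗ[R] W →ₗ[R] R)
    (hα : ∀ (M : Type u) [AddCommGroup M] [Module R M],
      Function.Injective (alphaMap κ M))
    (M : Type u) [AddCommGroup M] [Module R M] (N : Submodule R M) (x : M ⊗[R] W) :
    x ∈ LinearMap.range (N.subtype.rTensor W) ↔ ∀ v : V, alphaMap κ M x v ∈ N := by
  rw [← rTensor_mkQ W N, LinearMap.mem_ker]
  constructor
  · intro h v
    have := alphaMap_natural κ N.mkQ x v
    rw [h] at this
    simpa [Submodule.Quotient.mk_eq_zero] using this.symm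
  · intro h
    apply hα (M ⧸ N)
    rw [map_zero]
    ext v
    rw [alphaMap_natural]
    simpa [Submodule.Quotient.mk_eq_zero] using h v
end

section
/- Let P = (V, W) be a left R-pairing satisfying the α-condition and W' ⊆ W a left R-submodule, with induced pairing P' = (V, W'). Then P' satisfies the α-condition if and only if W' is a pure submodule of W. -/
open TensorProduct

/-- if `P = (V, W)` satisfies the `α`-condition and `W' ⊆ W` is a
submodule with induced pairing `P' = (V, W')`, then `P'` satisfies the `α`-condition
iff `W'` is a pure submodule of `W`. -/
theorem stmt_15 {R V W : Type u} [CommRing R] [AddCommGroup V] [Module R V]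
    [AddCommGroup W] [Module R W] (κ : V →ₗ[R] W →ₗ[R] R)
    (hα : ∀ (M : Type u) [AddCommGroup M] [Module R M],
      Function.Injective (alphaMap κ M))
    (W' : Submodule R W) :
    (∀ (M : Type u) [AddCommGroup M] [Module R M],
      Function.Injective (alphaMap (κ.compl₂ W'.subtype) M)) ↔
    (∀ (M : Type u) [AddCommGroup M] [Module R M],
      Function.Injective (W'.subtype.lTensor M)) := by
  have key : ∀ (M : Type u) [AddCommGroup M] [Module R M],
      alphaMap (κ.compl₂ W'.subtype) M = (alphaMap κ M).comp (W'.subtype.lTensor M) := by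
    intro M _ _
    ext m w
    rfl
  constructor
  · intro h M _ _
    have := h M
    rw [key M] at this
    exact Function.Injective.of_comp this
  · intro h M _ _
    rw [key M]
    exact (hα M).comp (h M)
end

section
/- Let Ω = (Y, W) be a left R-pairing satisfying the α-condition, ξ : V → Y an R-linear map of right R-modules, and P = (V, W) the induced pairing (⟨v, w⟩_P := ⟨ξ(v), w⟩_Ω). If ξ(V) is dense in Y with respect to the linear weak topology Y[T_ls(W)], then P satisfies the α-condition. -/
open TensorProduct

/-- if `Ω = (Y, W)` is a left `R`-pairing satisfying the `α`-condition,
`ξ : V → Y` is `R`-linear, and `ξ(V)` is dense in `Y` w.r.t. the linear weak topology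
(equivalently: every `y ∈ Y` can be matched by some `ξ(v)` on any finite subset of `W`),
then the induced pairing `P = (V, W)` satisfies the `α`-condition. -/
theorem stmt_16 {R V Y W : Type u} [CommRing R] [AddCommGroup V] [Module R V]
    [AddCommGroup Y] [Module R Y] [AddCommGroup W] [Module R W]
    (κΩ : Y →ₗ[R] W →ₗ[R] R)
    (hα : ∀ (M : Type u) [AddCommGroup M] [Module R M],
      Function.Injective (alphaMap κΩ M))
    (ξ : V →ₗ[R] Y)
    (hdense : ∀ (y : Y) (s : Finset W), ∃ v : V, ∀ w ∈ s, κΩ (ξ v) w = κΩ y w) :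
    ∀ (M : Type u) [AddCommGroup M] [Module R M],
      Function.Injective (alphaMap (κΩ ∘ₗ ξ) M) := by
  intro M _ _
  rw [injective_iff_map_eq_zero]
  classical
  have key : ∀ t : M ⊗[R] W, alphaMap (κΩ ∘ₗ ξ) M t = (alphaMap κΩ M t).comp ξ := by
    intro t
    induction t using TensorProduct.induction_on with
    | zero => simp
    | tmul m w =>
        ext v
        simp [alphaMap]
    | add x y hx hy =>
        ext v
        simp only [map_add, LinearMap.add_apply, LinearMap.comp_apply] at hx hy ⊢
        rw [hx, hy]; rfl
  intro t ht
  apply hα M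
  rw [map_zero]
  obtain ⟨S, rfl⟩ := TensorProduct.exists_finset t
  ext y
  obtain ⟨v, hv⟩ := hdense y (S.image Prod.snd)
  have h0 : alphaMap κΩ M (∑ p ∈ S, p.1 ⊗ₜ[R] p.2) (ξ v) = 0 := by
    have := congrArg (fun f => f v) (((key _).symm.trans ht))
    simpa using this
  calc alphaMap κΩ M (∑ p ∈ S, p.1 ⊗ₜ[R] p.2) y
      = ∑ p ∈ S, κΩ y p.2 • p.1 := by
        simp [alphaMap, map_sum]
    _ = ∑ p ∈ S, κΩ (ξ v) p.2 • p.1 := by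
        refine Finset.sum_congr rfl fun p hp => ?_
        rw [hv p.2 (Finset.mem_image_of_mem _ hp)]
    _ = alphaMap κΩ M (∑ p ∈ S, p.1 ⊗ₜ[R] p.2) (ξ v) := by
        simp [alphaMap, map_sum]
    _ = 0 := h0
end

section
/- Let R be right Noetherian, V a right R-module, and R^V the left R-module of all functions V → R. Then for every right R-module M, the canonical map β_M : M ⊗_R R^V → M^V, m ⊗ f ↦ [v ↦ m·f(v)], is injective. -/
open TensorProduct

/-- The canonical map `β_M : M ⊗_R R^V → M^V`, `m ⊗ f ↦ (v ↦ f v • m)`. -/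
noncomputable def betaMap (R V : Type*) [CommRing R]
    (M : Type*) [AddCommGroup M] [Module R M] : M ⊗[R] (V → R) →ₗ[R] (V → M) :=
  TensorProduct.lift <| LinearMap.mk₂ R (fun (m : M) (f : V → R) (v : V) => f v • m)
    (fun m₁ m₂ f => by funext v; simp [smul_add])
    (fun c m f => by funext v; exact smul_comm _ _ _)
    (fun m f₁ f₂ => by funext v; simp [add_smul])
    (fun c m f => by funext v; simp [smul_smul])

section Aux

variable {R V : Type*} [CommRing R]
variable {M N : Type*} [AddCommGroup M] [Module R M] [AddCommGroup N] [Module R N]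

lemma betaMap_tmul (m : M) (f : V → R) (v : V) :
    betaMap R V M (m ⊗ₜ f) v = f v • m := rfl

lemma betaMap_naturality (φ : M →ₗ[R] N) (x : M ⊗[R] (V → R)) (v : V) :
    betaMap R V N (LinearMap.rTensor (V → R) φ x) v = φ (betaMap R V M x v) := by
  induction x with
  | zero => simp
  | tmul m f => simp [betaMap_tmul]
  | add a b ha hb => simp [ha, hb]

variable (R V) in
/-- Inverse of `betaMap` on a finite free module `ι → R`. -/
noncomputable def invBeta (ι : Type*) [Fintype ι] [DecidableEq ι] :
    (V → ι → R) →ₗ[R] (ι → R) ⊗[R] (V → R) where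
  toFun h := ∑ i, Pi.single i (1 : R) ⊗ₜ (fun v => h v i)
  map_add' h₁ h₂ := by
    rw [← Finset.sum_add_distrib]
    refine Finset.sum_congr rfl fun i _ => ?_
    rw [← TensorProduct.tmul_add]; rfl
  map_smul' c h := by
    rw [RingHom.id_apply, Finset.smul_sum]
    refine Finset.sum_congr rfl fun i _ => ?_
    rw [← TensorProduct.tmul_smul]; rfl

lemma betaMap_invBeta {ι : Type*} [Fintype ι] [DecidableEq ι] (h : V → ι → R) (v : V) :
    betaMap R V (ι → R) (invBeta R V ι h) v = h v := by
  funext j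
  simp only [invBeta, LinearMap.coe_mk, AddHom.coe_mk, map_sum]
  rw [Finset.sum_apply, Finset.sum_apply]
  simp [betaMap_tmul, Pi.single_apply, mul_comm]

lemma invBeta_betaMap {ι : Type*} [Fintype ι] [DecidableEq ι] (x : (ι → R) ⊗[R] (V → R)) :
    invBeta R V ι (betaMap R V (ι → R) x) = x := by
  induction x with
  | zero => simp
  | tmul g f =>
    simp only [invBeta, LinearMap.coe_mk, AddHom.coe_mk]
    have : ∀ i : ι, (fun v => betaMap R V (ι → R) (g ⊗ₜ f) v i) = g i • f := by
      intro i; funext v; simp [betaMap_tmul, mul_comm]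
    have h2 : (∑ i, (g i • (Pi.single i 1 : ι → R))) = g := by
      funext j
      rw [Finset.sum_apply]
      simp [Pi.single_apply]
    calc ∑ i, Pi.single i (1 : R) ⊗ₜ[R] (fun v => betaMap R V (ι → R) (g ⊗ₜ f) v i)
        = ∑ i, ((g i • (Pi.single i 1 : ι → R))) ⊗ₜ[R] f := by
          refine Finset.sum_congr rfl fun i _ => ?_
          rw [this i]
          exact (TensorProduct.smul_tmul _ _ _).symm
      _ = g ⊗ₜ[R] f := by rw [← TensorProduct.sum_tmul, h2]
  | add a b ha hb => rw [map_add, map_add, ha, hb]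

lemma betaMap_injective_free {ι : Type*} [Fintype ι] [DecidableEq ι] :
    Function.Injective (betaMap R V (ι → R)) :=
  Function.LeftInverse.injective invBeta_betaMap

end Aux

/-- if `R` is (right) Noetherian, then for every `R`-module `M` the
canonical map `β_M : M ⊗_R R^V → M^V` is injective. -/
theorem stmt_17 {R : Type u} [CommRing R] [IsNoetherianRing R]
    (V : Type u) [AddCommGroup V] [Module R V]
    (M : Type u) [AddCommGroup M] [Module R M] :
    Function.Injective (betaMap R V M) := by
  rw [← LinearMap.ker_eq_bot, LinearMap.ker_eq_bot']
  intro z hz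
  -- write `z` as a finite sum of pure tensors
  obtain ⟨S, rfl⟩ := TensorProduct.exists_finset z
  classical
  set ι := {p // p ∈ S}
  set m : ι → M := fun p => p.1.1 with hm
  set f : ι → (V → R) := fun p => p.1.2 with hf
  set π : (ι → R) →ₗ[R] M := Fintype.linearCombination R m with hπ
  set y : (ι → R) ⊗[R] (V → R) := invBeta R V ι (fun v i => f i v) with hy
  have hzy : (∑ p ∈ S, p.1 ⊗ₜ[R] p.2) = LinearMap.rTensor (V → R) π y := by
    rw [hy]
    simp only [invBeta, LinearMap.coe_mk, AddHom.coe_mk, map_sum,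
      LinearMap.rTensor_tmul]
    rw [← Finset.sum_attach S (fun p => p.1 ⊗ₜ[R] p.2)]
    refine Finset.sum_congr rfl fun i _ => ?_
    rw [hπ, Fintype.linearCombination_apply_single, one_smul]
  -- `β y` lands pointwise in `ker π`
  have hker : ∀ v, betaMap R V (ι → R) y v ∈ LinearMap.ker π := by
    intro v
    rw [LinearMap.mem_ker, ← betaMap_naturality π y v, ← hzy, hz]
    rfl
  -- `ker π` is finitely generated since `R` is Noetherian
  obtain ⟨k, s, hs⟩ := Submodule.fg_iff_exists_fin_generating_family.1
    (IsNoetherian.noetherian (LinearMap.ker π))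
  have hmem : ∀ v, ∃ c : Fin k → R, ∑ j, c j • s j = betaMap R V (ι → R) y v := by
    intro v
    have := hker v
    rw [← hs] at this
    exact (Submodule.mem_span_range_iff_exists_fun R).1 this
  choose w hw using hmem
  set g : (Fin k → R) →ₗ[R] (ι → R) := Fintype.linearCombination R s with hg
  have hπg : π.comp g = 0 := by
    apply LinearMap.ext
    intro c
    simp only [LinearMap.comp_apply, LinearMap.zero_apply, hg,
      Fintype.linearCombination_apply]
    have : (∑ j, c j • s j) ∈ LinearMap.ker π := by
      rw [← hs]
      exact Submodule.sum_smul_mem _ _ fun j _ => Submodule.subset_span ⟨j, rfl⟩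
    exact this
  have hyg : y = LinearMap.rTensor (V → R) g (invBeta R V (Fin k) w) := by
    apply betaMap_injective_free
    funext v
    have h1 : betaMap R V (ι → R) (LinearMap.rTensor (V → R) g (invBeta R V (Fin k) w)) v
        = g (w v) := by
      rw [betaMap_naturality g _ v]
      exact congrArg g (betaMap_invBeta w v)
    rw [h1]
    exact (hw v).symm
  rw [hzy, hyg, ← LinearMap.comp_apply, ← LinearMap.rTensor_comp, hπg]
  simp
end

section
/- Let P = (V, W) and P' = (V', W') be left R-pairings of R-bimodules each satisfying the α-condition. Then the tensor product pairing P ⊗ P' = (V' ⊗_R V, W ⊗_R W'), with ⟨v' ⊗ v, w ⊗ w'⟩ := ⟨v, w·⟨v', w'⟩⟩, also satisfies the α-condition. -/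
open TensorProduct

/-- if the left `R`-pairings `P = (V, W)` and `P' = (V', W')` both satisfy
the `α`-condition, then so does the tensor product pairing
`P ⊗ P' = (V' ⊗_R V, W ⊗_R W')` with `⟨v' ⊗ v, w ⊗ w'⟩ = ⟨v, w⟩⟨v', w'⟩
(= ⟨v, w·⟨v', w'⟩⟩)`. -/
theorem stmt_19 {R V W V' W' : Type u} [CommRing R]
    [AddCommGroup V] [Module R V] [AddCommGroup W] [Module R W]
    [AddCommGroup V'] [Module R V'] [AddCommGroup W'] [Module R W']
    (κ : V →ₗ[R] W →ₗ[R] R) (κ' : V' →ₗ[R] W' →ₗ[R] R)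
    (hα : ∀ (M : Type u) [AddCommGroup M] [Module R M],
      Function.Injective (alphaMap κ M))
    (hα' : ∀ (M : Type u) [AddCommGroup M] [Module R M],
      Function.Injective (alphaMap κ' M))
    (κT : (V' ⊗[R] V) →ₗ[R] (W ⊗[R] W') →ₗ[R] R)
    (hκT : ∀ (v : V) (v' : V') (w : W) (w' : W'),
      κT (v' ⊗ₜ v) (w ⊗ₜ w') = κ v (κ' v' w' • w)) :
    ∀ (M : Type u) [AddCommGroup M] [Module R M],
      Function.Injective (alphaMap κT M) := by
  intro M _ _
  set e := TensorProduct.assoc R M W W' with he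
  have key : (TensorProduct.lcurry (RingHom.id R) V' V M) ∘ₗ (alphaMap κT M)
      = (LinearMap.llcomp R V' (M ⊗[R] W) (V →ₗ[R] M) (alphaMap κ M)) ∘ₗ
          (alphaMap κ' (M ⊗[R] W)) ∘ₗ (e.symm : M ⊗[R] (W ⊗[R] W') →ₗ[R] (M ⊗[R] W) ⊗[R] W') := by
    apply TensorProduct.ext
    apply LinearMap.ext; intro m
    apply TensorProduct.ext
    apply LinearMap.ext; intro w
    apply LinearMap.ext; intro w'
    apply LinearMap.ext; intro v'
    apply LinearMap.ext; intro v
    simp [alphaMap, hκT, smul_smul, e, mul_comm]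
  intro x y hxy
  have h1 : (TensorProduct.lcurry (RingHom.id R) V' V M) (alphaMap κT M x)
      = (TensorProduct.lcurry (RingHom.id R) V' V M) (alphaMap κT M y) := by rw [hxy]
  have h2 := DFunLike.congr_fun key x
  have h3 := DFunLike.congr_fun key y
  simp only [LinearMap.comp_apply] at h2 h3
  rw [h2, h3] at h1
  have h4 : alphaMap κ' (M ⊗[R] W) (e.symm x) = alphaMap κ' (M ⊗[R] W) (e.symm y) := by
    apply LinearMap.ext; intro v'
    apply hα M
    exact DFunLike.congr_fun h1 v'
  have h5 := hα' (M ⊗[R] W) h4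
  exact e.symm.injective h5
end
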